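/- arXiv:1204.5167 — 2 statements merged into one kernel-verified Lean document; each statement's English description precedes it below -/
import Mathlib

section
/- If Γ is a PTFA group, then the integral group ring ℤΓ (the monoid algebra of Γ with coefficients in ℤ) is a domain: it is nontrivial and has no zero divisors. -/
/-!
By the leading-coefficient argument, already in Mathlib, the integral group ring of a group with
unique products is a domain, so it suffices to show that PTFA groups have unique products.
A torsion-free abelian group embeds in its divisible hull, a `ℚ`-vector space, which is linearly
ordered and so has unique products. Unique products lift along extensions `1 → N → G → Q → 1`:
a unique product `π a * π b` for the images of `A` and `B` in `Q` forces any factorisation of a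
product of the fibres `A ∩ aN`, `B ∩ Nb` to stay in these fibres, and after translating by `a⁻¹`
on the left and `b⁻¹` on the right the fibres lie in `N`. Induction up the PTFA series finishes
the proof.
-/

/-- A group `Γ` is poly-torsion-free-abelian (PTFA) if it admits a finite normal series
`1 = Gₙ ◁ Gₙ₋₁ ◁ ⋯ ◁ G₀ = Γ` of subgroups such that each successive quotient `Gᵢ/Gᵢ₊₁` is
torsion-free abelian.  Here `G 0 = Γ` and `G (last) = 1`, each `G (i+1)` is normal in `G i`
(expressed by closure under conjugation by elements of `G i`), the quotient `G i / G (i+1)`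
is abelian (expressed by all commutators of elements of `G i` lying in `G (i+1)`), and the
quotient is torsion-free (expressed by: if a positive power of an element of `G i` lies in
`G (i+1)`, then the element itself lies in `G (i+1)`). -/
def IsPTFA (Γ : Type*) [Group Γ] : Prop :=
  ∃ (n : ℕ) (G : Fin (n + 1) → Subgroup Γ),
    G 0 = ⊤ ∧ G (Fin.last n) = ⊥ ∧
    ∀ i : Fin n,
      G i.succ ≤ G i.castSucc ∧
      (∀ a ∈ G i.castSucc, ∀ b ∈ G i.succ, a * b * a⁻¹ ∈ G i.succ) ∧
      (∀ a ∈ G i.castSucc, ∀ b ∈ G i.castSucc, a * b * a⁻¹ * b⁻¹ ∈ G i.succ) ∧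
      (∀ a ∈ G i.castSucc, ∀ k : ℕ, 0 < k → a ^ k ∈ G i.succ → a ∈ G i.succ)

open Finset

theorem UniqueProds.of_isMulTorsionFree (G : Type*) [CommGroup G] [IsMulTorsionFree G] :
    UniqueProds G :=
  have : UniqueSums (Additive G) :=
    UniqueSums.of_injective_addHom (DivisibleHull.coeAddMonoidHom (M := Additive G)).toAddHom
      DivisibleHull.coe_injective inferInstance
  inferInstanceAs (UniqueProds (Multiplicative (Additive G)))

theorem Subgroup.exists_uniqueMul_of_forall_mem {G : Type*} [Group G] {N : Subgroup G}
    [UniqueProds N] {A B : Finset G} {a b : G} (ha : a ∈ A) (hb : b ∈ B)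
    (hA : ∀ x ∈ A, a⁻¹ * x ∈ N) (hB : ∀ y ∈ B, y * b⁻¹ ∈ N) :
    ∃ x ∈ A, ∃ y ∈ B, UniqueMul A B x y := by
  classical
  let A' : Finset N := (A.image (a⁻¹ * ·)).subtype (· ∈ N)
  let B' : Finset N := (B.image (· * b⁻¹)).subtype (· ∈ N)
  have memA' : ∀ x (hx : x ∈ A), (⟨a⁻¹ * x, hA x hx⟩ : N) ∈ A' :=
    fun x hx => mem_subtype.2 (mem_image_of_mem _ hx)
  have memB' : ∀ y (hy : y ∈ B), (⟨y * b⁻¹, hB y hy⟩ : N) ∈ B' :=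
    fun y hy => mem_subtype.2 (mem_image_of_mem (· * b⁻¹) hy)
  obtain ⟨c, hc, d, hd, hcd⟩ :=
    UniqueProds.uniqueMul_of_nonempty ⟨_, memA' a ha⟩ ⟨_, memB' b hb⟩
  obtain ⟨x, hx, hxc⟩ := mem_image.1 (mem_subtype.1 hc)
  obtain ⟨y, hy, hyd⟩ := mem_image.1 (mem_subtype.1 hd)
  refine ⟨x, hx, y, hy, fun x' y' hx' hy' he => ?_⟩
  have := hcd (memA' x' hx') (memB' y' hy')
    (Subtype.ext (by simp [← hxc, ← hyd, mul_assoc, ← mul_assoc x', he]))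
  simpa only [Subtype.ext_iff, ← hxc, ← hyd, mul_left_cancel_iff, mul_right_cancel_iff] using this

theorem UniqueProds.of_quotient {G : Type*} [Group G] (N : Subgroup G) [N.Normal]
    [UniqueProds N] [UniqueProds (G ⧸ N)] : UniqueProds G where
  uniqueMul_of_nonempty {A B} hA hB := by
    classical
    let π := (QuotientGroup.mk' N).toMulHom
    obtain ⟨_, hp, _, hq, hpq⟩ := uniqueMul_of_nonempty (hA.image π) (hB.image π)
    obtain ⟨a, ha, rfl⟩ := mem_image.1 hp
    obtain ⟨b, hb, rfl⟩ := mem_image.1 hq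
    obtain ⟨x, hx, y, hy, hxy⟩ := N.exists_uniqueMul_of_forall_mem
      (A := {x ∈ A | π x = π a}) (B := {y ∈ B | π y = π b})
      (mem_filter.2 ⟨ha, rfl⟩) (mem_filter.2 ⟨hb, rfl⟩)
      (fun x hx => QuotientGroup.eq.1 (mem_filter.1 hx).2.symm)
      (fun y hy => ‹N.Normal›.mem_comm (QuotientGroup.eq.1 (mem_filter.1 hy).2.symm))
    exact ⟨x, (mem_filter.1 hx).1, y, (mem_filter.1 hy).1,
      UniqueMul.of_image_filter π (mem_filter.1 hx).2 (mem_filter.1 hy).2 hpq hxy⟩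

theorem Subgroup.uniqueProds_of_torsionFree_abelian_quotient {Γ : Type*} [Group Γ]
    {H K : Subgroup Γ} (hKH : K ≤ H) (hconj : ∀ a ∈ H, ∀ b ∈ K, a * b * a⁻¹ ∈ K)
    (hcomm : ∀ a ∈ H, ∀ b ∈ H, a * b * a⁻¹ * b⁻¹ ∈ K)
    (htf : ∀ a ∈ H, ∀ k : ℕ, 0 < k → a ^ k ∈ K → a ∈ K) [UniqueProds K] : UniqueProds H := by
  let N := K.subgroupOf H
  have mem_N {a : H} : a ∈ N ↔ (a : Γ) ∈ K := mem_subgroupOf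
  have : N.Normal := ⟨fun b hb a => mem_N.2 (hconj a a.2 b (mem_N.1 hb))⟩
  have : UniqueProds N := (subgroupOfEquivOfLe hKH).uniqueProds_iff.2 ‹_›
  let _ : CommGroup (H ⧸ N) :=
    { mul_comm := by
        rintro ⟨a⟩ ⟨b⟩
        -- `(a * b)⁻¹ * (b * a)` is the commutator of `b⁻¹` and `a⁻¹`
        refine QuotientGroup.eq.2 (mem_N.2 ?_)
        simpa [mul_assoc] using hcomm _ (inv_mem b.2) _ (inv_mem a.2) }
  have : IsMulTorsionFree (H ⧸ N) := IsMulTorsionFree.of_not_isOfFinOrder <| by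
    rintro ⟨a⟩ ha hfin
    obtain ⟨k, hk, hak⟩ := isOfFinOrder_iff_pow_eq_one.1 hfin
    refine ha ((QuotientGroup.eq_one_iff a).2 (mem_N.2 (htf a a.2 k hk ?_)))
    exact (mem_N (a := a ^ k)).1 ((QuotientGroup.eq_one_iff (a ^ k)).1 hak)
  have := UniqueProds.of_isMulTorsionFree (H ⧸ N)
  exact UniqueProds.of_quotient N

theorem IsPTFA.uniqueProds {Γ : Type*} [Group Γ] (h : IsPTFA Γ) : UniqueProds Γ := by
  obtain ⟨n, G, hG0, hGlast, hG⟩ := h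
  have hGi : ∀ i, UniqueProds (G i) := Fin.reverseInduction
    (hGlast ▸ ⟨fun ⟨a, ha⟩ ⟨b, hb⟩ => ⟨a, ha, b, hb, UniqueMul.of_subsingleton⟩⟩)
    (fun i _ => Subgroup.uniqueProds_of_torsionFree_abelian_quotient (hG i).1 (hG i).2.1
      (hG i).2.2.1 (hG i).2.2.2)
  exact Subgroup.topEquiv.uniqueProds_iff.1 (hG0 ▸ hGi 0)

/-- If `Γ` is PTFA, then the integral group ring `ℤΓ` (the monoid algebra `MonoidAlgebra ℤ Γ`)
is a domain: it is nontrivial and has no zero divisors. -/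
theorem IsPTFA.groupRing_isDomain (Γ : Type*) [Group Γ] (h : IsPTFA Γ) :
    Nontrivial (MonoidAlgebra ℤ Γ) ∧
      ∀ a b : MonoidAlgebra ℤ Γ, a * b = 0 → a = 0 ∨ b = 0 := by
  have := h.uniqueProds
  exact ⟨inferInstance, fun _ _ => mul_eq_zero.1⟩
end

section
/- Let S be a commutative ring, let N be a flat S-module, and let C be a chain complex of S-modules. Then for every n there is an isomorphism of S-modules Hₙ(C ⊗_S N) ≅ Hₙ(C) ⊗_S N, where C ⊗_S N denotes the chain complex obtained by tensoring each module and each differential of C with N over S. -/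
open CategoryTheory MonoidalCategory

/-- Let `S` be a commutative ring, `N` a flat `S`-module, and `C` a chain complex of
`S`-modules.  Then for every `n` there is an isomorphism of `S`-modules
`Hₙ(C ⊗_S N) ≅ Hₙ(C) ⊗_S N`, where `C ⊗_S N` is the chain complex obtained by tensoring
each module and each differential of `C` with `N` over `S` (i.e. the image of `C` under the
functor `− ⊗ N` on `S`-modules). -/
theorem homology_tensor_flat (S : Type) [CommRing S] (N : ModuleCat S)
    (hN : Module.Flat S N) (C : ChainComplex (ModuleCat S) ℤ) (n : ℤ) :
    Nonempty ((((tensorRight N).mapHomologicalComplex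
        (ComplexShape.down ℤ)).obj C).homology n ≅ C.homology n ⊗ N) := by
  have hPH : (tensorRight N).PreservesHomology :=
    ((Functor.exact_tfae (tensorRight N)).out 1 2).1
      (fun T hT => Module.Flat.rTensor_shortComplex_exact N T hT)
  refine ⟨?_ ≪≫ (C.sc n).mapHomologyIso (tensorRight N)⟩
  exact ShortComplex.homologyMapIso (Iso.refl _)
end
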